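/- Fix an integer n ≥ 1 and α > −1. Let p_0,…,p_{n−1} be monic polynomials with deg p_j = j and let q_0,…,q_{n−1} be integrable functions on ℝ satisfying the biorthogonality ∫_{−∞}^{∞} p_j(x) q_k(x) dx = δ_{j,k}, with x^j q_k(x) integrable for all relevant j,k. Define Q_k(y) = (1/Γ(α+n)) ∫_0^∞ x^{α+n−1} e^{−x} q_k(y−x) dx and P_j(x) = ∑_{i=0}^{j} (−1)^i binom(α+n, i) p_j^{(i)}(x). Then ∫_{−∞}^{∞} P_j(x) Q_k(x) dx = δ_{j,k} for all j, k = 0,…,n−1. -/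

import Mathlib

open MeasureTheory Finset

noncomputable section

/-- Generalized binomial coefficient `binom(β, j) = β(β-1)⋯(β-j+1)/j!`. -/
def gbinom (β : ℝ) (j : ℕ) : ℝ := (∏ i ∈ Finset.range j, (β - i)) / (j.factorial : ℝ)

/-!
Write `β = α + n` and `D` for differentiation. Then `P_j = (1 - D)^β p_j`, the binomial series
in `D`, which terminates on polynomials. Taylor-expanding `R(y) = R((y - x) + x)` and applying
Fubini gives `∫ R Q_k = ∫ ((1 - D)^(-β) R) q_k` for every polynomial `R`, because the `i`-th
moment `Γ(β + i) / Γ(β)` of the Gamma density is `i!` times the `i`-th coefficient of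
`(1 - X)^(-β)`. Since `(1 - X)^(-β) (1 - X)^β = 1` as power series and `φ ↦ φ(D)` is
multiplicative, `∫ P_j Q_k = ∫ p_j q_k = δ_jk`.
-/

namespace Polynomial

variable {R : Type*} [CommSemiring R]

/-- `φ(D)` for `D = derivative`, truncated at `p.natDegree` since higher derivatives of `p`
vanish. -/
def diffOp (φ : PowerSeries R) (p : R[X]) : R[X] :=
  ∑ k ∈ range (p.natDegree + 1), C (PowerSeries.coeff k φ) * derivative^[k] p

theorem diffOp_eq_sum_range (φ : PowerSeries R) {p : R[X]} {d : ℕ} (hd : p.natDegree < d) :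
    diffOp φ p = ∑ k ∈ range d, C (PowerSeries.coeff k φ) * derivative^[k] p := by
  refine sum_subset (range_subset_range.mpr hd) fun k _ hk => ?_
  rw [mem_range, not_lt] at hk
  rw [iterate_derivative_eq_zero (by omega), mul_zero]

theorem natDegree_diffOp_le (φ : PowerSeries R) (p : R[X]) :
    (diffOp φ p).natDegree ≤ p.natDegree :=
  natDegree_sum_le_of_forall_le _ _ fun k _ =>
    (natDegree_C_mul_le _ _).trans <| (natDegree_iterate_derivative p k).trans (Nat.sub_le _ _)

theorem diffOp_one (p : R[X]) : diffOp 1 p = p := by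
  rw [diffOp, sum_eq_single 0 (fun k _ hk => by simp [PowerSeries.coeff_one, hk]) (by simp)]
  simp

theorem diffOp_diffOp (φ ψ : PowerSeries R) (p : R[X]) :
    diffOp φ (diffOp ψ p) = diffOp (φ * ψ) p := by
  set d := p.natDegree
  set f : ℕ → ℕ → R[X] := fun i l =>
    C (PowerSeries.coeff i φ * PowerSeries.coeff l ψ) * derivative^[i + l] p
  have hf : ∀ i l, d < i + l → f i l = 0 := fun i l h => by
    simp only [f, iterate_derivative_eq_zero h, mul_zero]
  have lhs : diffOp φ (diffOp ψ p) = ∑ i ∈ range (d + 1), ∑ l ∈ range (d + 1 - i), f i l := by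
    rw [diffOp_eq_sum_range φ (Nat.lt_succ_of_le (natDegree_diffOp_le ψ p))]
    refine sum_congr rfl fun i hi => ?_
    rw [diffOp, iterate_derivative_sum, mul_sum, eq_comm]
    refine sum_subset (range_subset_range.mpr (by omega)) (fun l _ hl => hf i l ?_)
      |>.trans (sum_congr rfl fun l _ => ?_)
    · rw [mem_range] at hl; omega
    · rw [iterate_derivative_C_mul, ← Function.iterate_add_apply]
      simp only [f, map_mul, mul_assoc]
  have rhs : diffOp (φ * ψ) p = ∑ m ∈ range (d + 1), ∑ i ∈ range (m + 1), f i (m - i) := by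
    refine sum_congr rfl fun m _ => ?_
    rw [PowerSeries.coeff_mul, map_sum, sum_mul, Nat.sum_antidiagonal_eq_sum_range_succ
      (fun i l => C (PowerSeries.coeff i φ * PowerSeries.coeff l ψ) * derivative^[m] p)]
    refine sum_congr rfl fun i hi => ?_
    rw [mem_range] at hi
    simp only [f, Nat.add_sub_cancel' (Nat.lt_succ_iff.mp hi)]
  rw [lhs, rhs, sum_range_diag_flip]

theorem eval_add_eq_sum_hasseDeriv (p : R[X]) (z x : R) :
    p.eval (z + x) = ∑ i ∈ range (p.natDegree + 1), (hasseDeriv i p).eval z * x ^ i := by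
  rw [add_comm, ← taylor_eval, eval_eq_sum_range, natDegree_taylor]
  simp only [taylor_coeff]

end Polynomial

open Polynomial

lemma gbinom_eq_choose (β : ℝ) (j : ℕ) : gbinom β j = Ring.choose β j := by
  rw [gbinom, Ring.choose_eq_smul, smul_eq_mul, ← aeval_eq_smeval, aeval_def, eval₂_eq_eval_map,
    descPochhammer_map, descPochhammer_eval_eq_prod_range, inv_mul_eq_div]

namespace PowerSeries

/-- The binomial series `(1 - X)^β`. -/
def oneSubPow (β : ℝ) : PowerSeries ℝ := rescale (-1) (binomialSeries ℝ β)

lemma coeff_oneSubPow (β : ℝ) (k : ℕ) : coeff k (oneSubPow β) = (-1) ^ k * gbinom β k := by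
  rw [oneSubPow, coeff_rescale, binomialSeries_coeff, smul_eq_mul, mul_one, gbinom_eq_choose]

lemma factorial_mul_coeff_oneSubPow_neg (β : ℝ) (k : ℕ) :
    k.factorial * coeff k (oneSubPow (-β)) = (ascPochhammer ℝ k).eval β := by
  rw [oneSubPow, coeff_rescale, binomialSeries_coeff, smul_eq_mul, mul_one, Ring.choose_neg',
    ← ascPochhammer_smeval_eq_eval, ← Ring.factorial_nsmul_multichoose_eq_ascPochhammer,
    Units.smul_def, Int.coe_negOnePow_natCast, zsmul_eq_mul, nsmul_eq_mul,
    ← mul_assoc ((-1 : ℝ) ^ k)]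
  push_cast
  rw [← mul_pow]
  simp

lemma oneSubPow_neg_mul_self (β : ℝ) : oneSubPow (-β) * oneSubPow β = 1 := by
  rw [oneSubPow, oneSubPow, ← map_mul, ← binomialSeries_add, neg_add_cancel, binomialSeries_zero,
    map_one]

end PowerSeries

section MomentTransfer

variable {μ : Measure ℝ} {f g : ℝ → ℝ}

theorem integrable_eval_mul {p : ℝ[X]}
    (hf : ∀ i ≤ p.natDegree, Integrable (fun x => x ^ i * f x) μ) :
    Integrable (fun x => p.eval x * f x) μ := by
  simp_rw [eval_eq_sum_range, sum_mul]
  refine integrable_finsetSum _ fun i hi => ?_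
  simpa only [mul_assoc] using (hf i (Nat.lt_succ_iff.mp (mem_range.mp hi))).const_mul (p.coeff i)

/-- Taylor-expand `p` at `y - x`, then shear `(x, y) ↦ (x, y - x)` and use Fubini. -/
theorem integral_eval_mul_integral_mul_sub [SFinite μ] (p : ℝ[X])
    (hg : ∀ i ≤ p.natDegree, Integrable (fun x => x ^ i * g x) μ)
    (hf : ∀ i ≤ p.natDegree, Integrable (fun z => z ^ i * f z)) :
    ∫ y, p.eval y * ∫ x, g x * f (y - x) ∂μ =
      ∑ i ∈ range (p.natDegree + 1),
        (∫ x, x ^ i * g x ∂μ) * ∫ z, (hasseDeriv i p).eval z * f z := by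
  set N := p.natDegree
  set G : ℝ × ℝ → ℝ := fun w =>
    ∑ i ∈ range (N + 1), w.1 ^ i * g w.1 * ((hasseDeriv i p).eval w.2 * f w.2)
  have hterm : ∀ i ∈ range (N + 1), Integrable
      (fun w : ℝ × ℝ => w.1 ^ i * g w.1 * ((hasseDeriv i p).eval w.2 * f w.2)) (μ.prod volume) :=
    fun i hi => (hg i (Nat.lt_succ_iff.mp (mem_range.mp hi))).mul_prod
      (integrable_eval_mul fun m hm =>
        hf m (hm.trans ((natDegree_hasseDeriv_le p i).trans (Nat.sub_le _ _))))
  have hG : Integrable G (μ.prod volume) := integrable_finsetSum _ hterm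
  have hshear := measurePreserving_prod_sub μ (volume : Measure ℝ)
  have hGshear : ∀ x y, g x * f (y - x) * p.eval y = G (x, y - x) := fun x y => by
    have taylor := eval_add_eq_sum_hasseDeriv p (y - x) x
    rw [sub_add_cancel] at taylor
    rw [taylor, mul_sum]
    exact sum_congr rfl fun i _ => by ring
  calc ∫ y, p.eval y * ∫ x, g x * f (y - x) ∂μ
      = ∫ y, ∫ x, G (x, y - x) ∂μ := by
        congr 1 with y
        rw [mul_comm, ← integral_mul_const]
        exact congr_arg _ (funext fun x => hGshear x y)
    _ = ∫ w, G (w.1, w.2 - w.1) ∂μ.prod volume :=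
        (integral_prod_symm _ (hshear.integrable_comp_of_integrable hG)).symm
    _ = ∫ w, G w ∂(μ.prod volume).map fun w => (w.1, w.2 - w.1) :=
        (integral_map hshear.aemeasurable (by rw [hshear.map_eq]; exact hG.1)).symm
    _ = ∫ w, G w ∂μ.prod volume := by rw [hshear.map_eq]
    _ = _ := by
        simp only [G, integral_finsetSum _ hterm]
        exact sum_congr rfl fun i _ =>
          integral_prod_mul (fun x => x ^ i * g x) (fun z => (hasseDeriv i p).eval z * f z)

end MomentTransfer

theorem Real.Gamma_add_nat_eq_ascPochhammer_mul {β : ℝ} (hβ : 0 < β) (i : ℕ) :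
    Real.Gamma (β + i) = (ascPochhammer ℝ i).eval β * Real.Gamma β := by
  induction i with
  | zero => simp
  | succ i ih =>
    rw [Nat.cast_succ, ← add_assoc, Real.Gamma_add_one (by positivity), ih, ascPochhammer_succ_eval]
    ring

theorem pow_mul_rpow_sub_one_mul_exp_neg {x : ℝ} (hx : 0 < x) (β : ℝ) (i : ℕ) :
    x ^ i * (x ^ (β - 1) * Real.exp (-x)) = Real.exp (-x) * x ^ (β + i - 1) := by
  rw [show β + i - 1 = (β - 1) + i by ring, Real.rpow_add hx, Real.rpow_natCast]
  ring

theorem integrableOn_pow_mul_rpow_sub_one_mul_exp_neg {β : ℝ} (hβ : 0 < β) (i : ℕ) :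
    IntegrableOn (fun x : ℝ => x ^ i * (x ^ (β - 1) * Real.exp (-x))) (Set.Ioi 0) :=
  (Real.GammaIntegral_convergent (by positivity : 0 < β + i)).congr_fun
    (fun _ hx => (pow_mul_rpow_sub_one_mul_exp_neg hx β i).symm) measurableSet_Ioi

theorem integral_pow_mul_rpow_sub_one_mul_exp_neg {β : ℝ} (hβ : 0 < β) (i : ℕ) :
    ∫ x in Set.Ioi (0 : ℝ), x ^ i * (x ^ (β - 1) * Real.exp (-x)) = Real.Gamma (β + i) := by
  rw [Real.Gamma_eq_integral (by positivity)]
  exact setIntegral_congr_fun measurableSet_Ioi fun _ hx => pow_mul_rpow_sub_one_mul_exp_neg hx β i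

def gammaConv (β : ℝ) (f : ℝ → ℝ) (y : ℝ) : ℝ :=
  1 / Real.Gamma β * ∫ x in Set.Ioi (0 : ℝ), x ^ (β - 1) * Real.exp (-x) * f (y - x)

theorem integral_eval_mul_gammaConv {β : ℝ} (hβ : 0 < β) {f : ℝ → ℝ} (p : ℝ[X])
    (hf : ∀ i ≤ p.natDegree, Integrable (fun z => z ^ i * f z)) :
    ∫ y, p.eval y * gammaConv β f y =
      ∫ z, (diffOp (PowerSeries.oneSubPow (-β)) p).eval z * f z := by
  have hterm : ∀ i ∈ range (p.natDegree + 1), Integrable (fun z =>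
      (C (PowerSeries.coeff i (PowerSeries.oneSubPow (-β))) *
        derivative^[i] p).eval z * f z) := fun i _ =>
    integrable_eval_mul fun m hm => hf m <| hm.trans <|
      (natDegree_C_mul_le _ _).trans <| (natDegree_iterate_derivative p i).trans (Nat.sub_le _ _)
  simp only [gammaConv, mul_left_comm (p.eval _), integral_const_mul]
  rw [integral_eval_mul_integral_mul_sub p
      (fun i _ => integrableOn_pow_mul_rpow_sub_one_mul_exp_neg hβ i) hf,
    diffOp]
  simp only [eval_finsetSum, sum_mul]
  rw [integral_finsetSum _ hterm, mul_sum]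
  refine sum_congr rfl fun i _ => ?_
  have hpt : ∀ c z, (C c * derivative^[i] p).eval z * f z =
      i.factorial * c * ((hasseDeriv i p).eval z * f z) := fun c z => by
    rw [← factorial_smul_hasseDeriv, LinearMap.smul_apply, eval_mul, eval_C, eval_smul,
      nsmul_eq_mul]
    ring
  simp only [hpt, integral_const_mul]
  rw [integral_pow_mul_rpow_sub_one_mul_exp_neg hβ, Real.Gamma_add_nat_eq_ascPochhammer_mul hβ,
    ← PowerSeries.factorial_mul_coeff_oneSubPow_neg]
  field_simp [(Real.Gamma_pos_of_pos hβ).ne']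

theorem biorthogonality_transfer_general
    (n : ℕ) (hn : 1 ≤ n) (α : ℝ) (hα : -1 < α)
    (p : Fin n → Polynomial ℝ)
    (hdeg : ∀ j, (p j).natDegree = (j : ℕ))
    (q : Fin n → ℝ → ℝ)
    (hqint : ∀ (k : Fin n) (m : ℕ), m ≤ n - 1 → Integrable (fun x : ℝ => x ^ m * q k x))
    (hbi : ∀ j k : Fin n,
      (∫ x : ℝ, (p j).eval x * q k x) = if j = k then (1 : ℝ) else 0)
    (Q : Fin n → ℝ → ℝ)
    (hQ : ∀ (k : Fin n) (y : ℝ),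
      Q k y = (1 / Real.Gamma (α + n)) *
        ∫ x in Set.Ioi (0 : ℝ), x ^ (α + n - 1) * Real.exp (-x) * q k (y - x))
    (P : Fin n → Polynomial ℝ)
    (hP : ∀ j : Fin n,
      P j = ∑ i ∈ Finset.range ((j : ℕ) + 1),
        Polynomial.C ((-1 : ℝ) ^ i * gbinom (α + n) i) * Polynomial.derivative^[i] (p j)) :
    ∀ j k : Fin n, (∫ x : ℝ, (P j).eval x * Q k x) = if j = k then (1 : ℝ) else 0 := by
  intro j k
  have hβ : 0 < α + n := by
    have : (1 : ℝ) ≤ n := by exact_mod_cast hn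
    linarith
  have hPj : P j = diffOp (PowerSeries.oneSubPow (α + n)) (p j) := by
    simp only [hP j, diffOp, hdeg j, PowerSeries.coeff_oneSubPow]
  have hQk : Q k = gammaConv (α + n) (q k) := funext (hQ k)
  have hPdeg : (P j).natDegree ≤ n - 1 := by
    rw [hPj]
    exact (natDegree_diffOp_le _ _).trans (by rw [hdeg j]; omega)
  rw [hQk, integral_eval_mul_gammaConv hβ _ fun i hi => hqint k i (hi.trans hPdeg), hPj,
    diffOp_diffOp, PowerSeries.oneSubPow_neg_mul_self, diffOp_one]
  exact hbi j k

/-- Let `p_0, …, p_{n-1}` be monic polynomials with `deg p_j = j` and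
`q_0, …, q_{n-1}` integrable functions with `∫ p_j q_k = δ_{jk}` and all moments
`x^m q_k(x)` integrable. If `Q_k(y) = (1/Γ(α+n)) ∫_0^∞ x^{α+n-1} e^{-x} q_k(y-x) dx` and
`P_j = ∑_i (-1)^i binom(α+n, i) p_j^{(i)}`, then `∫ P_j Q_k = δ_{jk}`. -/
theorem biorthogonality_transfer
    (n : ℕ) (hn : 1 ≤ n) (α : ℝ) (hα : -1 < α)
    (p : Fin n → Polynomial ℝ)
    (hmonic : ∀ j, (p j).Monic) (hdeg : ∀ j, (p j).natDegree = (j : ℕ))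
    (q : Fin n → ℝ → ℝ)
    (hqint : ∀ (k : Fin n) (m : ℕ), m ≤ n - 1 → Integrable (fun x : ℝ => x ^ m * q k x))
    (hbi : ∀ j k : Fin n,
      (∫ x : ℝ, (p j).eval x * q k x) = if j = k then (1 : ℝ) else 0)
    (Q : Fin n → ℝ → ℝ)
    (hQ : ∀ (k : Fin n) (y : ℝ),
      Q k y = (1 / Real.Gamma (α + n)) *
        ∫ x in Set.Ioi (0 : ℝ), x ^ (α + n - 1) * Real.exp (-x) * q k (y - x))
    (P : Fin n → Polynomial ℝ)
    (hP : ∀ j : Fin n,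
      P j = ∑ i ∈ Finset.range ((j : ℕ) + 1),
        Polynomial.C ((-1 : ℝ) ^ i * gbinom (α + n) i) * Polynomial.derivative^[i] (p j)) :
    ∀ j k : Fin n, (∫ x : ℝ, (P j).eval x * Q k x) = if j = k then (1 : ℝ) else 0 :=
  biorthogonality_transfer_general n hn α hα p hdeg q hqint hbi Q hQ P hP
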